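/- Let C ∈ ℝ^{p×p}, η > 0 with 4η²λ_max(CCᵀ) ≤ 1. Define J = [[0, C],[-Cᵀ, 0]], S = diag((I-4η²CCᵀ)^{1/2}, (I-4η²CᵀC)^{1/2}), R₁ = ((I - 2ηJ) + S)/2 and R₂ = ((I - 2ηJ) - S)/2. Then R₁ + R₂ = I - 2ηJ and R₁R₂ = R₂R₁ = -ηJ. -/

import Mathlib

open Matrix
noncomputable section

/-- Largest eigenvalue (for symmetric matrices: sup of real spectrum). -/
def lamMax {n : Type*} [Fintype n] [DecidableEq n] (M : Matrix n n ℝ) : ℝ :=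
  sSup (spectrum ℝ M)

/-- Smallest eigenvalue (for symmetric matrices: inf of real spectrum). -/
def lamMin {n : Type*} [Fintype n] [DecidableEq n] (M : Matrix n n ℝ) : ℝ :=
  sInf (spectrum ℝ M)

/-- Operator (spectral) norm of a square real matrix. -/
def opNorm {n : Type*} [Fintype n] [DecidableEq n] (M : Matrix n n ℝ) : ℝ :=
  ‖toEuclideanCLM (𝕜 := ℝ) M‖

open Classical in
/-- Positive semidefinite square root (junk value `0` if `M` is not PSD). -/
def msqrt {n : Type*} [Fintype n] [DecidableEq n] (M : Matrix n n ℝ) : Matrix n n ℝ :=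
  if h : M.PosSemidef then
    h.1.eigenvectorUnitary.1 * diagonal ((↑) ∘ (√·) ∘ h.1.eigenvalues) *
      (star h.1.eigenvectorUnitary : Matrix n n ℝ) else 0

/-!
Write `c = 4η²`. Since `J² = diag(-CCᵀ, -CᵀC)`, the matrix `S` is the positive semidefinite square
root of `M = 1 + cJ² = diag(1 - cCCᵀ, 1 - cCᵀC)`; both blocks are positive semidefinite because
`CCᵀ` and `CᵀC` have the same nonzero spectrum. As a continuous function of `M`, which commutes
with `J`, the root `S` commutes with `J`, so with `A = 1 - 2ηJ` both products `R₁R₂` and `R₂R₁`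
equal `(A² - S²)/4 = (-4ηJ)/4`.
-/

open scoped MatrixOrder

section

variable {𝕜 m n : Type*} [RCLike 𝕜] [Fintype m] [Fintype n] [DecidableEq m] [DecidableEq n]

lemma Matrix.fromBlocks_nonneg {A : Matrix m m 𝕜} {B : Matrix n n 𝕜}
    (hA : 0 ≤ A) (hB : 0 ≤ B) : 0 ≤ fromBlocks A 0 0 B := by
  obtain ⟨P, rfl⟩ := CStarAlgebra.nonneg_iff_eq_star_mul_self.mp hA
  obtain ⟨Q, rfl⟩ := CStarAlgebra.nonneg_iff_eq_star_mul_self.mp hB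
  convert star_mul_self_nonneg (fromBlocks P 0 0 Q) using 1
  simp [star_eq_conjTranspose, fromBlocks_conjTranspose, fromBlocks_multiply]

lemma Matrix.sqrt_fromBlocks {A : Matrix m m 𝕜} {B : Matrix n n 𝕜}
    (hA : 0 ≤ A) (hB : 0 ≤ B) :
    CFC.sqrt (fromBlocks A 0 0 B) = fromBlocks (CFC.sqrt A) 0 0 (CFC.sqrt B) :=
  CFC.sqrt_unique (by simp [fromBlocks_multiply, CFC.sqrt_mul_sqrt_self, hA, hB])
    (fromBlocks_nonneg (CFC.sqrt_nonneg A) (CFC.sqrt_nonneg B))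

end

lemma Matrix.PosSemidef.msqrt_eq_sqrt {n : Type*} [Fintype n] [DecidableEq n]
    {M : Matrix n n ℝ} (hM : M.PosSemidef) : msqrt M = CFC.sqrt M := by
  rw [CFC.sqrt_eq_real_sqrt M hM.nonneg, cfcₙ_eq_cfc, hM.1.cfc_eq, msqrt, dif_pos hM,
    IsHermitian.cfc, Unitary.conjStarAlgAut_apply]
  rfl

lemma IsSelfAdjoint.one_sub_smul_nonneg {A : Type*} [Ring A] [StarRing A] [PartialOrder A]
    [StarOrderedRing A] [TopologicalSpace A] [Algebra ℝ A]
    [ContinuousFunctionalCalculus ℝ A IsSelfAdjoint]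
    {a : A} (ha : IsSelfAdjoint a) {c : ℝ} (h : ∀ x ∈ spectrum ℝ a, c * x ≤ 1) :
    0 ≤ 1 - c • a := by
  have : cfc (fun x => 1 - c * x) a = 1 - c • a := by
    rw [cfc_sub .., cfc_const_one .., cfc_const_mul .., cfc_id' ..]
  exact this ▸ cfc_nonneg fun x hx => sub_nonneg.mpr (h x hx)

lemma le_lamMax {n : Type*} [Fintype n] [DecidableEq n] {M : Matrix n n ℝ} {x : ℝ}
    (hx : x ∈ spectrum ℝ M) : x ≤ lamMax M :=
  le_csSup finite_real_spectrum.bddAbove hx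

lemma one_sub_smul_mul_transpose_nonneg {n : Type*} [Fintype n] [DecidableEq n]
    (C : Matrix n n ℝ) {c : ℝ} (hc : 0 ≤ c) (h : c * lamMax (C * Cᵀ) ≤ 1) :
    0 ≤ 1 - c • (C * Cᵀ) ∧ 0 ≤ 1 - c • (Cᵀ * C) := by
  have hspec : ∀ x ∈ spectrum ℝ (C * Cᵀ), c * x ≤ 1 := fun x hx =>
    (mul_le_mul_of_nonneg_left (le_lamMax hx) hc).trans h
  have hCCt : IsSelfAdjoint (C * Cᵀ) := by
    simpa [star_eq_conjTranspose] using IsSelfAdjoint.mul_star_self C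
  have hCtC : IsSelfAdjoint (Cᵀ * C) := by
    simpa [star_eq_conjTranspose] using IsSelfAdjoint.star_mul_self C
  refine ⟨hCCt.one_sub_smul_nonneg hspec, hCtC.one_sub_smul_nonneg fun x hx => ?_⟩
  rcases eq_or_ne x 0 with rfl | hx0
  · simp
  · have hx' : x ∈ spectrum ℝ (Cᵀ * C) \ {0} := ⟨hx, hx0⟩
    rw [spectrum.nonzero_mul_comm] at hx'
    exact hspec x hx'.1

lemma half_add_mul_half_sub {R : Type*} [Ring R] [Algebra ℝ R] {η : ℝ} {J S : R}
    (hJS : Commute J S) (hS : S * S = 1 + (4 * η ^ 2) • (J * J)) :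
    (1 / 2 : ℝ) • ((1 - (2 * η) • J) + S) * ((1 / 2 : ℝ) • ((1 - (2 * η) • J) - S)) = -(η • J) ∧
    (1 / 2 : ℝ) • ((1 - (2 * η) • J) - S) * ((1 / 2 : ℝ) • ((1 - (2 * η) • J) + S)) = -(η • J) := by
  have hAS : Commute (1 - (2 * η) • J) S := (Commute.one_left S).sub_left (hJS.smul_left _)
  have hAA : (1 - (2 * η) • J) * (1 - (2 * η) • J) - S * S = -((4 * η) • J) := by
    rw [hS]
    simp only [sub_mul, mul_sub, one_mul, mul_one, smul_mul_assoc, mul_smul_comm]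
    module
  constructor
  · rw [smul_mul_smul_comm, ← hAS.mul_self_sub_mul_self_eq, hAA]
    module
  · rw [smul_mul_smul_comm, ← hAS.mul_self_sub_mul_self_eq', hAA]
    module

theorem stmt7_general {p : ℕ} (C : Matrix (Fin p) (Fin p) ℝ) (η : ℝ)
    (h : 4 * η ^ 2 * lamMax (C * Cᵀ) ≤ 1)
    (J S R₁ R₂ : Matrix (Fin p ⊕ Fin p) (Fin p ⊕ Fin p) ℝ)
    (hJ : J = fromBlocks 0 C (-Cᵀ) 0)
    (hS : S = fromBlocks (msqrt (1 - (4 * η ^ 2) • (C * Cᵀ))) 0 0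
      (msqrt (1 - (4 * η ^ 2) • (Cᵀ * C))))
    (hR₁ : R₁ = (1 / 2 : ℝ) • ((1 - (2 * η) • J) + S))
    (hR₂ : R₂ = (1 / 2 : ℝ) • ((1 - (2 * η) • J) - S)) :
    R₁ + R₂ = 1 - (2 * η) • J ∧ R₁ * R₂ = -(η • J) ∧ R₂ * R₁ = -(η • J) := by
  obtain ⟨h₁, h₂⟩ := one_sub_smul_mul_transpose_nonneg C (by positivity) h
  have hJJ : 1 + (4 * η ^ 2) • (J * J) =
      fromBlocks (1 - (4 * η ^ 2) • (C * Cᵀ)) 0 0 (1 - (4 * η ^ 2) • (Cᵀ * C)) := by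
    rw [hJ, fromBlocks_multiply, ← fromBlocks_one, fromBlocks_smul, fromBlocks_add]
    simp [sub_eq_add_neg]
  have hM : 0 ≤ 1 + (4 * η ^ 2) • (J * J) := hJJ ▸ fromBlocks_nonneg h₁ h₂
  have hS_sqrt : S = CFC.sqrt (1 + (4 * η ^ 2) • (J * J)) := by
    rw [hS, h₁.posSemidef.msqrt_eq_sqrt, h₂.posSemidef.msqrt_eq_sqrt, hJJ,
      sqrt_fromBlocks h₁ h₂]
  have hJM : Commute J (1 + (4 * η ^ 2) • (J * J)) :=
    (Commute.one_right J).add_right (((Commute.refl J).mul_right (Commute.refl J)).smul_right _)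
  have hJS : Commute J S := by
    rw [hS_sqrt, CFC.sqrt_eq_cfc]
    exact (hJM.symm.cfc_nnreal _).symm
  have hSS : S * S = 1 + (4 * η ^ 2) • (J * J) := hS_sqrt ▸ CFC.sqrt_mul_sqrt_self _ hM
  subst hR₁ hR₂
  exact ⟨by module, half_add_mul_half_sub hJS hSS⟩

theorem stmt7 {p : ℕ} (C : Matrix (Fin p) (Fin p) ℝ) (η : ℝ) (hη : 0 < η)
    (h : 4 * η ^ 2 * lamMax (C * Cᵀ) ≤ 1)
    (J S R₁ R₂ : Matrix (Fin p ⊕ Fin p) (Fin p ⊕ Fin p) ℝ)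
    (hJ : J = fromBlocks 0 C (-Cᵀ) 0)
    (hS : S = fromBlocks (msqrt (1 - (4 * η ^ 2) • (C * Cᵀ))) 0 0
      (msqrt (1 - (4 * η ^ 2) • (Cᵀ * C))))
    (hR₁ : R₁ = (1 / 2 : ℝ) • ((1 - (2 * η) • J) + S))
    (hR₂ : R₂ = (1 / 2 : ℝ) • ((1 - (2 * η) • J) - S)) :
    R₁ + R₂ = 1 - (2 * η) • J ∧ R₁ * R₂ = -(η • J) ∧ R₂ * R₁ = -(η • J) :=
  stmt7_general C η h J S R₁ R₂ hJ hS hR₁ hR₂
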